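/- For every m ≥ 1 there exists N₀ such that for all N ≥ N₀, every intersection ⋂_{i=1}^m (X_N + a_i) of m translates (mod 1) of the middle 1/N-th Cantor set X_N is nonempty; i.e., the maximal number of simultaneously intersectable translates tends to infinity with N. -/

import Mathlib

open Set

/-- ratio (N-1)/(2N) of each half of the middle-1/N Cantor construction -/
noncomputable def cantorRatio (N : ℕ) : ℝ := (N - 1) / (2 * N)

/-- k-th stage C_k of the middle 1/N Cantor set -/
noncomputable def cantorStage (N : ℕ) : ℕ → Set ℝ
  | 0 => Set.Icc 0 1
  | k + 1 => (fun x => cantorRatio N * x) '' cantorStage N k ∪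
      (fun x => cantorRatio N * x + (N + 1) / (2 * N)) '' cantorStage N k

/-- the middle 1/N Cantor set -/
noncomputable def middleCantorSet (N : ℕ) : Set ℝ := ⋂ k, cantorStage N k

/-- number of stages whose removed middle intervals have length at least δ -/
noncomputable def numStages (N : ℕ) (δ : ℝ) : ℕ :=
  sSup {j : ℕ | δ ≤ 1 / N * cantorRatio N ^ (j - 1)}

/-- X_δ : perform only the removal steps removing intervals of length ≥ δ -/
noncomputable def cantorApprox (N : ℕ) (δ : ℝ) : Set ℝ := cantorStage N (numStages N δ)

/-- translate of a set of reals by b, taken modulo 1 -/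
noncomputable def transl (b : ℝ) (S : Set ℝ) : Set (AddCircle (1 : ℝ)) :=
  (fun x : ℝ => (x : AddCircle (1 : ℝ)) + (b : AddCircle (1 : ℝ))) '' S

/-!
Write `r = (N - 1) / (2 N)`. The `k`-th stage is a union of `2 ^ k` intervals of length `r ^ k`,
and inside an interval of level `L` the gaps between the intervals of deeper levels have length
at most `r ^ L / N`. The `m` translates are refined in turn, two levels per step: at step `t` the
translate number `t mod m` is replaced by one of its intervals of level `2 t + 2` inside the
current interval of length `r ^ (2 t)`. That translate was last refined at step `t - m`, so its
gaps have length at most `r ^ (2 t - 2 m + 2) / N`, which is small compared with `r ^ (2 t)` as soon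
as `N ≥ 9 ^ m`. Hence every stage of the `m` translates has a common point, and compactness
passes to the Cantor set itself.
-/
section Ratio

variable {N : ℕ}

theorem cantorRatio_nonneg : 0 ≤ cantorRatio N := by
  unfold cantorRatio
  rcases Nat.eq_zero_or_pos N with rfl | hN
  · simp
  · have : (1 : ℝ) ≤ N := by exact_mod_cast hN
    exact div_nonneg (by linarith) (by positivity)

theorem cantorRatio_pos (hN : 1 < N) : 0 < cantorRatio N := by
  have : (1 : ℝ) < N := by exact_mod_cast hN
  exact div_pos (by linarith) (by linarith)

theorem cantorRatio_le_half : cantorRatio N ≤ 1 / 2 := by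
  unfold cantorRatio
  rcases Nat.eq_zero_or_pos N with rfl | hN
  · norm_num
  · have : (0 : ℝ) < N := by exact_mod_cast hN
    rw [div_le_iff₀ (by positivity)]
    linarith

theorem one_third_le_cantorRatio (hN : 3 ≤ N) : 1 / 3 ≤ cantorRatio N := by
  have : (3 : ℝ) ≤ N := by exact_mod_cast hN
  unfold cantorRatio
  rw [le_div_iff₀ (by positivity)]
  linarith

theorem add_one_div_two_mul_eq_one_sub_cantorRatio (hN : N ≠ 0) :
    ((N : ℝ) + 1) / (2 * N) = 1 - cantorRatio N := by
  unfold cantorRatio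
  field_simp
  ring

theorem one_sub_two_mul_cantorRatio (hN : N ≠ 0) : 1 - 2 * cantorRatio N = 1 / N := by
  unfold cantorRatio
  field_simp
  ring

end Ratio

/-- Started from `{0}` this gives the left ends of the intervals of `cantorStage N k`. -/
noncomputable def cantorStageFrom (N : ℕ) (S : Set ℝ) : ℕ → Set ℝ
  | 0 => S
  | k + 1 => (fun x => cantorRatio N * x) '' cantorStageFrom N S k ∪
      (fun x => cantorRatio N * x + (N + 1) / (2 * N)) '' cantorStageFrom N S k

section Stages

variable {N : ℕ} {S : Set ℝ}

theorem cantorStage_eq_cantorStageFrom : cantorStage N = cantorStageFrom N (Icc 0 1) := by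
  funext k
  induction k with
  | zero => rfl
  | succ k ih => simp only [cantorStage, cantorStageFrom, ih]

theorem zero_mem_cantorStageFrom (h : (0 : ℝ) ∈ S) (k : ℕ) :
    (0 : ℝ) ∈ cantorStageFrom N S k := by
  induction k with
  | zero => exact h
  | succ k ih => exact Or.inl ⟨0, ih, mul_zero _⟩

theorem add_one_div_two_mul_mem_cantorStageFrom_one :
    ((N : ℝ) + 1) / (2 * N) ∈ cantorStageFrom N {0} 1 :=
  Or.inr ⟨0, rfl, by simp⟩

theorem add_mul_mem_cantorStageFrom {k j : ℕ} {e y : ℝ} (he : e ∈ cantorStageFrom N {0} k)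
    (hy : y ∈ cantorStageFrom N S j) :
    e + cantorRatio N ^ k * y ∈ cantorStageFrom N S (k + j) := by
  induction k generalizing e with
  | zero =>
    obtain rfl : e = 0 := he
    simpa using hy
  | succ k ih =>
    rw [Nat.succ_add]
    rcases he with ⟨f, hf, rfl⟩ | ⟨f, hf, rfl⟩
    · exact Or.inl ⟨f + cantorRatio N ^ k * y, ih hf, by ring⟩
    · exact Or.inr ⟨f + cantorRatio N ^ k * y, ih hf, by ring⟩

theorem cantorStageFrom_succ_subset (h : cantorStageFrom N S 1 ⊆ S) (k : ℕ) :
    cantorStageFrom N S (k + 1) ⊆ cantorStageFrom N S k := by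
  induction k with
  | zero => exact h
  | succ k ih => exact union_subset_union (image_mono ih) (image_mono ih)

theorem IsCompact.cantorStageFrom (hS : IsCompact S) (k : ℕ) :
    IsCompact (cantorStageFrom N S k) := by
  induction k with
  | zero => exact hS
  | succ k ih => exact (ih.image (by fun_prop)).union (ih.image (by fun_prop))

theorem isCompact_cantorStage (k : ℕ) : IsCompact (cantorStage N k) := by
  rw [cantorStage_eq_cantorStageFrom]
  exact isCompact_Icc.cantorStageFrom k

theorem cantorStage_antitone (hN : N ≠ 0) : Antitone (cantorStage N) := by
  have hr0 : 0 ≤ cantorRatio N := cantorRatio_nonneg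
  have hr1 : cantorRatio N ≤ 1 / 2 := cantorRatio_le_half
  refine antitone_nat_of_succ_le fun k => ?_
  rw [cantorStage_eq_cantorStageFrom]
  refine cantorStageFrom_succ_subset ?_ k
  rintro _ (⟨y, ⟨hy0, hy1⟩, rfl⟩ | ⟨y, ⟨hy0, hy1⟩, rfl⟩) <;>
    simp only [add_one_div_two_mul_eq_one_sub_cantorRatio hN]
  · exact ⟨by positivity, by nlinarith⟩
  · exact ⟨by nlinarith, by nlinarith⟩

theorem Icc_subset_cantorStage (hN : 1 < N) {k : ℕ} {e : ℝ}
    (he : e ∈ cantorStageFrom N {0} k) :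
    Icc e (e + cantorRatio N ^ k) ⊆ cantorStage N k := by
  intro x ⟨hex, hxe⟩
  have hrk : 0 < cantorRatio N ^ k := pow_pos (cantorRatio_pos hN) k
  have hy : (x - e) / cantorRatio N ^ k ∈ cantorStageFrom N (Icc 0 1) 0 :=
    ⟨div_nonneg (by linarith) hrk.le, (div_le_one hrk).2 (by linarith)⟩
  rw [cantorStage_eq_cantorStageFrom]
  simpa [mul_div_cancel₀ _ hrk.ne'] using add_mul_mem_cantorStageFrom he hy

end Stages

section LeftEnds

variable {N : ℕ}

/-- The gaps of the construction inside an interval of level `L` are at most `r ^ L / N` long. -/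
theorem exists_leftEnd_between (hN : N ≠ 0) (q : ℕ) :
    ∀ {L : ℕ} {e u : ℝ}, e ∈ cantorStageFrom N {0} L → e ≤ u →
      u + cantorRatio N ^ (L + q) ≤ e + cantorRatio N ^ L →
      ∃ e' ∈ cantorStageFrom N {0} (L + q),
        u ≤ e' ∧ e' ≤ u + cantorRatio N ^ L / N + cantorRatio N ^ (L + q) := by
  have hr0 : 0 ≤ cantorRatio N := cantorRatio_nonneg
  have hr1 : cantorRatio N ≤ 1 / 2 := cantorRatio_le_half
  induction q with
  | zero =>
    intro L e u he heu hue
    rw [Nat.add_zero] at hue ⊢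
    have : 0 ≤ cantorRatio N ^ L / N := by positivity
    exact ⟨e, he, by linarith, by linarith [pow_nonneg hr0 L]⟩
  | succ q ih =>
    intro L e u he heu hue
    set r := cantorRatio N
    have hgap : r ^ L - 2 * r ^ (L + 1) = r ^ L / N := by
      rw [div_eq_mul_one_div, ← one_sub_two_mul_cantorRatio hN, pow_succ]
      ring
    have hsmall : r ^ (L + 1) / N ≤ r ^ L / N :=
      div_le_div_of_nonneg_right
        (pow_le_pow_of_le_one hr0 (by linarith) (Nat.le_succ L)) (Nat.cast_nonneg N)
    have hleft : e ∈ cantorStageFrom N {0} (L + 1) := by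
      simpa using add_mul_mem_cantorStageFrom he
        (zero_mem_cantorStageFrom (N := N) (mem_singleton (0 : ℝ)) 1)
    have hright : e + r ^ L * (1 - r) ∈ cantorStageFrom N {0} (L + 1) := by
      rw [← add_one_div_two_mul_eq_one_sub_cantorRatio hN]
      exact add_mul_mem_cantorStageFrom he add_one_div_two_mul_mem_cantorStageFrom_one
    rw [← Nat.add_assoc, Nat.add_right_comm] at hue ⊢
    -- `u` lies in the left child `[e, e + r ^ (L + 1)]`, in the middle gap, or in the right child
    by_cases h1 : u + r ^ (L + 1 + q) ≤ e + r ^ (L + 1)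
    · obtain ⟨e', he', hue', he'u⟩ := ih hleft heu h1
      exact ⟨e', he', hue', by linarith⟩
    by_cases h2 : u ≤ e + r ^ L * (1 - r)
    · refine ⟨e + r ^ L * (1 - r) + r ^ (L + 1) * 0,
        add_mul_mem_cantorStageFrom hright (zero_mem_cantorStageFrom (mem_singleton 0) q),
        by linarith, ?_⟩
      rw [pow_succ] at h1 hgap ⊢
      linarith
    · have hre : e + r ^ L * (1 - r) + r ^ (L + 1) = e + r ^ L := by ring
      obtain ⟨e', he', hue', he'u⟩ := ih hright (u := u) (by linarith) (by linarith)
      exact ⟨e', he', hue', by linarith⟩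

/-- `B` is a left end of an interval of `cantorStage N L` translated by `b` modulo `1`. -/
def IsLeftEndModOne (N : ℕ) (b : ℝ) (L : ℕ) (B : ℝ) : Prop :=
  ∃ n : ℤ, ∃ e ∈ cantorStageFrom N {0} L, B = b + n + e

theorem IsLeftEndModOne.exists_between (hN : N ≠ 0) {b B x : ℝ} {L : ℕ} (q : ℕ)
    (hB : IsLeftEndModOne N b L B) (hBx : B ≤ x)
    (hxB : x + cantorRatio N ^ (L + q) ≤ B + cantorRatio N ^ L) :
    ∃ B', IsLeftEndModOne N b (L + q) B' ∧
      x ≤ B' ∧ B' ≤ x + cantorRatio N ^ L / N + cantorRatio N ^ (L + q) := by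
  obtain ⟨n, e, he, rfl⟩ := hB
  obtain ⟨e', he', h1, h2⟩ :=
    exists_leftEnd_between hN q he (u := x - (b + n)) (by linarith) (by linarith)
  exact ⟨b + n + e', ⟨n, e', he', rfl⟩, by linarith, by linarith⟩

theorem exists_isLeftEndModOne_between (hN : N ≠ 0) (b x : ℝ) (q : ℕ) :
    ∃ B, IsLeftEndModOne N b q B ∧ x ≤ B ∧ B ≤ x + 1 / N + cantorRatio N ^ q := by
  set n := ⌊x - b⌋
  have hn : b + n ≤ x := by linarith [Int.floor_le (x - b)]
  have hn' : x < b + n + 1 := by linarith [Int.lt_floor_add_one (x - b)]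
  have hzero : (0 : ℝ) ∈ cantorStageFrom N {0} q := zero_mem_cantorStageFrom (mem_singleton 0) q
  by_cases hq : x + cantorRatio N ^ q ≤ b + n + 1
  · have hB : IsLeftEndModOne N b 0 (b + n) := ⟨n, 0, rfl, by simp⟩
    simpa using hB.exists_between hN q hn (by simpa using hq)
  · have : (0 : ℝ) ≤ 1 / N := by positivity
    refine ⟨b + (n + 1 : ℤ) + 0, ⟨n + 1, 0, hzero, rfl⟩, ?_, ?_⟩ <;>
      push_cast <;> linarith

theorem IsLeftEndModOne.coe_mem_transl (hN : 1 < N) {b B x : ℝ} {L K : ℕ}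
    (hB : IsLeftEndModOne N b L B) (hx : x ∈ Icc B (B + cantorRatio N ^ L)) (hKL : K ≤ L) :
    (x : AddCircle (1 : ℝ)) ∈ transl b (cantorStage N K) := by
  obtain ⟨n, e, he, rfl⟩ := hB
  have hxe : x - (b + n) ∈ Icc e (e + cantorRatio N ^ L) :=
    ⟨by linarith [hx.1], by linarith [hx.2]⟩
  refine ⟨x - (b + n),
    cantorStage_antitone (by omega) hKL (Icc_subset_cantorStage hN he hxe), ?_⟩
  simp only [← AddCircle.coe_add, show x - (b + n) + b = x + (-n : ℤ) by push_cast; ring]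
  simp

end LeftEnds

section Refinement

variable {N d : ℕ}

theorem div_add_two_mul_pow_le
    (hgap : 1 / N ≤ cantorRatio N ^ (2 * d) * (1 - 2 * cantorRatio N ^ 2))
    {k : ℕ} (hk : k ≤ d) (L : ℕ) :
    cantorRatio N ^ L / N + 2 * cantorRatio N ^ (L + 2 * k + 2) ≤
      cantorRatio N ^ (L + 2 * k) := by
  set r := cantorRatio N
  have hr0 : 0 ≤ r := cantorRatio_nonneg
  have hr1 : r ≤ 1 / 2 := cantorRatio_le_half
  have hgap' : 1 / N ≤ r ^ (2 * k) * (1 - 2 * r ^ 2) :=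
    hgap.trans <| mul_le_mul_of_nonneg_right
      (pow_le_pow_of_le_one hr0 (by linarith) (by omega)) (by nlinarith)
  have := mul_le_mul_of_nonneg_left hgap' (pow_nonneg hr0 L)
  calc r ^ L / N + 2 * r ^ (L + 2 * k + 2)
      = r ^ L * (1 / N) + 2 * r ^ (L + 2 * k + 2) := by ring
    _ ≤ r ^ L * (r ^ (2 * k) * (1 - 2 * r ^ 2)) + 2 * r ^ (L + 2 * k + 2) := by gcongr
    _ = r ^ (L + 2 * k) := by ring

/-- In the state after step `t`, `s` is the last step at which the translate `a j` was refined. -/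
def RefinementState (N d : ℕ) (a : Fin (d + 1) → ℝ) (t : ℕ) (x : ℝ) : Prop :=
  ∀ j : Fin (d + 1), (j : ℕ) < t → ∃ s < t, s % (d + 1) = j ∧ t ≤ s + d + 1 ∧
    ∃ B, IsLeftEndModOne N (a j) (2 * s + 2) B ∧
      B ≤ x ∧ x + cantorRatio N ^ (2 * t) ≤ B + cantorRatio N ^ (2 * s + 2)

/-- The translate refined at step `t` was last refined at step `t - d - 1` or never, so by
`hgap` its gaps are short compared with `r ^ (2 t)`. -/
theorem RefinementState.exists_next (hN : N ≠ 0)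
    (hgap : 1 / N ≤ cantorRatio N ^ (2 * d) * (1 - 2 * cantorRatio N ^ 2))
    {a : Fin (d + 1) → ℝ} {t : ℕ} {x : ℝ} (h : RefinementState N d a t x) :
    ∃ B, IsLeftEndModOne N (a ⟨t % (d + 1), Nat.mod_lt t d.succ_pos⟩) (2 * t + 2) B ∧
      x ≤ B ∧ B + cantorRatio N ^ (2 * t + 2) ≤ x + cantorRatio N ^ (2 * t) := by
  set j₀ : Fin (d + 1) := ⟨t % (d + 1), Nat.mod_lt t d.succ_pos⟩
  rcases Nat.lt_or_ge t (d + 1) with ht | ht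
  · obtain ⟨B, hB, hxB, hBx⟩ := exists_isLeftEndModOne_between hN (a j₀) x (2 * t + 2)
    have := div_add_two_mul_pow_le hgap (k := t) (by omega) 0
    simp only [pow_zero, zero_add] at this
    exact ⟨B, hB, hxB, by linarith⟩
  · obtain ⟨s, hst, -, hts, B, hB, hBx, hxB⟩ := h j₀ (lt_of_lt_of_le j₀.isLt ht)
    obtain ⟨k, rfl⟩ : ∃ k, t = s + 1 + k := ⟨t - (s + 1), by omega⟩
    have hlevel : 2 * s + 2 + 2 * (k + 1) = 2 * (s + 1 + k) + 2 := by ring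
    have hsmall := div_add_two_mul_pow_le hgap (k := k) (by omega) (2 * s + 2)
    have hmono : cantorRatio N ^ (2 * (s + 1 + k) + 2) ≤ cantorRatio N ^ (2 * (s + 1 + k)) :=
      pow_le_pow_of_le_one cantorRatio_nonneg (cantorRatio_le_half.trans (by norm_num)) (by omega)
    rw [show 2 * s + 2 + 2 * k + 2 = 2 * (s + 1 + k) + 2 by ring,
      show 2 * s + 2 + 2 * k = 2 * (s + 1 + k) by ring] at hsmall
    obtain ⟨B', hB', hxB', hB'x⟩ :=
      hB.exists_between hN (2 * (k + 1)) hBx (by rw [hlevel]; linarith)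
    rw [hlevel] at hB' hB'x
    exact ⟨B', hB', hxB', by linarith⟩

theorem RefinementState.succ {a : Fin (d + 1) → ℝ} {t : ℕ} {x B : ℝ}
    (h : RefinementState N d a t x)
    (hB : IsLeftEndModOne N (a ⟨t % (d + 1), Nat.mod_lt t d.succ_pos⟩) (2 * t + 2) B)
    (hxB : x ≤ B) (hBx : B + cantorRatio N ^ (2 * t + 2) ≤ x + cantorRatio N ^ (2 * t)) :
    RefinementState N d a (t + 1) B := by
  intro j hj
  by_cases hj₀ : (j : ℕ) = t % (d + 1)
  · obtain rfl : j = ⟨t % (d + 1), Nat.mod_lt t d.succ_pos⟩ := Fin.ext hj₀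
    exact ⟨t, t.lt_succ_self, rfl, by omega, B, hB, le_rfl, by rw [Nat.mul_succ]⟩
  have hjt : (j : ℕ) < t := by
    refine lt_of_le_of_ne (Nat.lt_succ_iff.1 hj) fun hjt => hj₀ ?_
    rw [← hjt, Nat.mod_eq_of_lt j.isLt]
  obtain ⟨s, hst, hsj, hts, B₀, hB₀, hB₀x, hxB₀⟩ := h j hjt
  have hts' : t ≠ s + d + 1 := by
    rintro rfl
    exact hj₀ (by rw [← hsj, Nat.add_assoc, Nat.add_mod_right])
  refine ⟨s, by omega, hsj, by omega, B₀, hB₀, by linarith, ?_⟩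
  rw [Nat.mul_succ]
  linarith

theorem exists_refinementState (hN : N ≠ 0)
    (hgap : 1 / N ≤ cantorRatio N ^ (2 * d) * (1 - 2 * cantorRatio N ^ 2))
    (a : Fin (d + 1) → ℝ) (t : ℕ) : ∃ x, RefinementState N d a t x := by
  induction t with
  | zero => exact ⟨0, fun j hj => absurd hj (Nat.not_lt_zero _)⟩
  | succ t ih =>
    obtain ⟨x, hx⟩ := ih
    obtain ⟨B, hB, hxB, hBx⟩ := hx.exists_next hN hgap
    exact ⟨B, hx.succ hB hxB hBx⟩

theorem nonempty_iInter_transl_cantorStage (hN : 1 < N)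
    (hgap : 1 / N ≤ cantorRatio N ^ (2 * d) * (1 - 2 * cantorRatio N ^ 2))
    (a : Fin (d + 1) → ℝ) (K : ℕ) : (⋂ j, transl (a j) (cantorStage N K)).Nonempty := by
  obtain ⟨x, hx⟩ := exists_refinementState (by omega) hgap a (K + d + 1)
  refine ⟨x, mem_iInter.2 fun j => ?_⟩
  obtain ⟨s, -, -, hts, B, hB, hBx, hxB⟩ := hx j (by omega)
  have : 0 ≤ cantorRatio N ^ (2 * (K + d + 1)) := pow_nonneg cantorRatio_nonneg _
  exact hB.coe_mem_transl hN ⟨hBx, by linarith⟩ (by omega)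

end Refinement

theorem Continuous.image_iInter_of_antitone {X Y : Type*} [TopologicalSpace X]
    [TopologicalSpace Y] [T2Space X] [T1Space Y] {f : X → Y} (hf : Continuous f)
    {K : ℕ → Set X} (hK : ∀ n, IsCompact (K n)) (hanti : Antitone K) :
    f '' ⋂ n, K n = ⋂ n, f '' K n := by
  refine (image_iInter_subset K f).antisymm fun z hz => ?_
  have hfib : IsClosed (f ⁻¹' {z}) := isClosed_singleton.preimage hf
  obtain ⟨x, hx⟩ := IsCompact.nonempty_iInter_of_sequence_nonempty_isCompact_isClosed
    (fun n => K n ∩ f ⁻¹' {z}) (fun n => inter_subset_inter_left _ (hanti n.le_succ))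
    (fun n => mem_iInter.1 hz n) ((hK 0).inter_right hfib) (fun n => (hK n).isClosed.inter hfib)
  rw [← iInter_inter] at hx
  exact ⟨x, hx⟩

theorem nonempty_iInter_transl_middleCantorSet {N d : ℕ} (hN : 1 < N)
    (hgap : 1 / N ≤ cantorRatio N ^ (2 * d) * (1 - 2 * cantorRatio N ^ 2))
    (a : Fin (d + 1) → ℝ) : (⋂ j, transl (a j) (middleCantorSet N)).Nonempty := by
  have := Fact.mk (zero_lt_one' ℝ)
  have hcont (b : ℝ) : Continuous fun x : ℝ => (x : AddCircle (1 : ℝ)) + b :=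
    (AddCircle.continuous_mk' 1).add continuous_const
  have hanti := cantorStage_antitone (N := N) (by omega)
  set Z : ℕ → Set (AddCircle (1 : ℝ)) := fun K => ⋂ j, transl (a j) (cantorStage N K)
  have hZ : ∀ K, IsClosed (Z K) := fun K =>
    isClosed_iInter fun j => ((isCompact_cantorStage K).image (hcont (a j))).isClosed
  have hX : ⋂ j, transl (a j) (middleCantorSet N) = ⋂ K, Z K := by
    simp only [Z, transl, middleCantorSet,
      (hcont _).image_iInter_of_antitone isCompact_cantorStage hanti]
    exact iInter_comm _
  rw [hX]
  exact IsCompact.nonempty_iInter_of_sequence_nonempty_isCompact_isClosed Z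
    (fun K => iInter_mono fun j => image_mono (hanti K.le_succ))
    (nonempty_iInter_transl_cantorStage hN hgap a) (hZ 0).isCompact hZ

theorem one_div_le_of_nine_pow_le {N d : ℕ} (hN : 9 ^ (d + 1) ≤ N) :
    1 / N ≤ cantorRatio N ^ (2 * d) * (1 - 2 * cantorRatio N ^ 2) := by
  have hr3 : 1 / 3 ≤ cantorRatio N :=
    one_third_le_cantorRatio ((Nat.le_self_pow d.succ_ne_zero 9).trans' (by norm_num) |>.trans hN)
  have hr2 : cantorRatio N ≤ 1 / 2 := cantorRatio_le_half
  have h9 : (9 : ℝ) ^ (d + 1) ≤ N := by exact_mod_cast hN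
  calc (1 : ℝ) / N ≤ 1 / 9 ^ (d + 1) := one_div_le_one_div_of_le (by positivity) h9
    _ = (1 / 9) ^ d * (1 / 9) := by rw [pow_succ, one_div_pow, one_div_mul_one_div]
    _ ≤ (cantorRatio N ^ 2) ^ d * (1 - 2 * cantorRatio N ^ 2) := by
        gcongr
        · nlinarith
        · nlinarith
    _ = cantorRatio N ^ (2 * d) * (1 - 2 * cantorRatio N ^ 2) := by rw [pow_mul]

theorem stmt19_general (m : ℕ) : ∃ N₀ : ℕ, ∀ N : ℕ, N₀ ≤ N →
    ∀ a : Fin m → ℝ, (⋂ i, transl (a i) (middleCantorSet N)).Nonempty := by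
  cases m with
  | zero => exact ⟨0, fun _ _ _ => by simp⟩
  | succ d =>
    refine ⟨9 ^ (d + 1), fun N hN a => ?_⟩
    have h1N : 1 < N := (Nat.one_lt_pow d.succ_ne_zero (by norm_num)).trans_le hN
    exact nonempty_iInter_transl_middleCantorSet h1N (one_div_le_of_nine_pow_le hN) a

theorem stmt19 (m : ℕ) (hm : 1 ≤ m) : ∃ N₀ : ℕ, ∀ N : ℕ, N₀ ≤ N →
    ∀ a : Fin m → ℝ, (⋂ i, transl (a i) (middleCantorSet N)).Nonempty :=
  stmt19_general m
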